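/- There exists a group homomorphism φ from the mixed braid group B_{m,n} (given by its presentation) to the Artin braid group B_{m+n} on m+n strands such that φ(a_i) = σ_m σ_{m−1} ⋯ σ_{i+1} σ_i^2 σ_{i+1}^{−1} ⋯ σ_m^{−1} for 1 ≤ i ≤ m, and φ(σ_j) = σ_{m+j} for 1 ≤ j ≤ n−1; that is, the images of the generators satisfy all the defining relations of B_{m,n} inside B_{m+n}. -/

import Mathlib

/-- Defining relations of the Artin braid group on `N` strands, with generators
indexed by `Fin (N-1)` (index `s : Fin (N-1)` corresponds to the 1-based generator
`σ_{s+1}`): the far commutation relations and the braid relations. -/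
def braidRels (N : ℕ) : Set (FreeGroup (Fin (N - 1))) :=
  {x | ∃ s t : Fin (N - 1), (s : ℕ) + 2 ≤ (t : ℕ) ∧
      x = FreeGroup.of s * FreeGroup.of t * (FreeGroup.of s)⁻¹ * (FreeGroup.of t)⁻¹} ∪
  {x | ∃ s t : Fin (N - 1), (s : ℕ) + 1 = (t : ℕ) ∧
      x = FreeGroup.of s * FreeGroup.of t * FreeGroup.of s *
          (FreeGroup.of t)⁻¹ * (FreeGroup.of s)⁻¹ * (FreeGroup.of t)⁻¹}

/-- The Artin braid group on `N` strands. -/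
abbrev BraidGroup (N : ℕ) := PresentedGroup (braidRels N)

/-- The generator `σ_s` (1-based, `1 ≤ s ≤ N-1`); junk value `1` out of range. -/
def sig (N s : ℕ) : BraidGroup N :=
  if h : 1 ≤ s ∧ s ≤ N - 1 then PresentedGroup.of ⟨s - 1, by omega⟩ else 1

/-- The loop element `a_i = σ_m σ_{m-1} ⋯ σ_{i+1} · σ_i² · σ_{i+1}⁻¹ ⋯ σ_m⁻¹`
(so `a_m = σ_m²`) in the braid group on `N` strands, `m` of which are fixed. -/
def loop (N m i : ℕ) : BraidGroup N :=
  (((List.range (m - i)).map (fun l => sig N (m - l))).prod) * (sig N i) ^ 2 *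
    (((List.range (m - i)).map (fun l => sig N (m - l))).prod)⁻¹

/-- `λ_l := σ_{m+l} σ_{m+l-1} ⋯ σ_{m+1}`, with `λ_0 := 1`. -/
def lam (N m l : ℕ) : BraidGroup N :=
  ((List.range l).map (fun t => sig N (m + l - t))).prod

/-- The positive looping `∏_{l=0}^{q-1} λ_l a_j λ_l⁻¹` of a `q`-strand cable of
moving strands around the `j`-th fixed strand. -/
def cable (N m j q : ℕ) : BraidGroup N :=
  ((List.range q).map (fun l => lam N m l * loop N m j * (lam N m l)⁻¹)).prod

/-- The free-group generator corresponding to the loop generator `a_{i+1}`. -/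
def genA (m n : ℕ) (i : Fin m) : FreeGroup (Fin m ⊕ Fin (n - 1)) :=
  FreeGroup.of (Sum.inl i)

/-- The free-group generator corresponding to the braiding generator `σ_{k+1}`. -/
def genS (m n : ℕ) (k : Fin (n - 1)) : FreeGroup (Fin m ⊕ Fin (n - 1)) :=
  FreeGroup.of (Sum.inr k)

/-- The defining relations of the mixed braid group `B_{m,n}`:
`σ_k σ_j = σ_j σ_k` for `|k-j| > 1`; `σ_k σ_{k+1} σ_k = σ_{k+1} σ_k σ_{k+1}`;
`a_i σ_k = σ_k a_i` for `k ≥ 2`; `a_i σ_1 a_i σ_1 = σ_1 a_i σ_1 a_i`;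
`a_i (σ_1 a_r σ_1⁻¹) = (σ_1 a_r σ_1⁻¹) a_i` for `r < i`.
(Indices of generators are 0-based: `Sum.inl i ↦ a_{i+1}`, `Sum.inr k ↦ σ_{k+1}`.) -/
def mixedRels (m n : ℕ) : Set (FreeGroup (Fin m ⊕ Fin (n - 1))) :=
  {x | ∃ k j : Fin (n - 1), (k : ℕ) + 2 ≤ (j : ℕ) ∧
      x = genS m n k * genS m n j * (genS m n k)⁻¹ * (genS m n j)⁻¹} ∪
  {x | ∃ k j : Fin (n - 1), (k : ℕ) + 1 = (j : ℕ) ∧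
      x = genS m n k * genS m n j * genS m n k *
          (genS m n j)⁻¹ * (genS m n k)⁻¹ * (genS m n j)⁻¹} ∪
  {x | ∃ (i : Fin m) (k : Fin (n - 1)), 1 ≤ (k : ℕ) ∧
      x = genA m n i * genS m n k * (genA m n i)⁻¹ * (genS m n k)⁻¹} ∪
  {x | ∃ (i : Fin m) (k : Fin (n - 1)), (k : ℕ) = 0 ∧
      x = genA m n i * genS m n k * genA m n i * genS m n k *
          (genA m n i)⁻¹ * (genS m n k)⁻¹ * (genA m n i)⁻¹ * (genS m n k)⁻¹} ∪
  {x | ∃ (i r : Fin m) (k : Fin (n - 1)), (r : ℕ) < (i : ℕ) ∧ (k : ℕ) = 0 ∧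
      x = genA m n i * (genS m n k * genA m n r * (genS m n k)⁻¹) *
          (genA m n i)⁻¹ * (genS m n k * genA m n r * (genS m n k)⁻¹)⁻¹}

/-- The mixed braid group `B_{m,n}`. -/
abbrev MixedBraid (m n : ℕ) := PresentedGroup (mixedRels m n)

/-- The loop generator `a_i` (1-based, `1 ≤ i ≤ m`); junk value `1` out of range. -/
def aGen (m n i : ℕ) : MixedBraid m n :=
  if h : 1 ≤ i ∧ i ≤ m then PresentedGroup.of (Sum.inl ⟨i - 1, by omega⟩) else 1

/-- The braiding generator `σ_k` (1-based, `1 ≤ k ≤ n-1`); junk value `1` out of range. -/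
def sGen (m n k : ℕ) : MixedBraid m n :=
  if h : 1 ≤ k ∧ k ≤ n - 1 then PresentedGroup.of (Sum.inr ⟨k - 1, by omega⟩) else 1

/-- `λ_{l,1} := σ_l σ_{l-1} ⋯ σ_1`, with `λ_{0,1} := 1`. -/
def lamD (m n l : ℕ) : MixedBraid m n :=
  ((List.range l).map (fun t => sGen m n (l - t))).prod

/-- `λ_{1,l} := σ_1 σ_2 ⋯ σ_l`, with `λ_{1,0} := 1`. -/
def lamU (m n l : ℕ) : MixedBraid m n :=
  ((List.range l).map (fun t => sGen m n (t + 1))).prod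

/-!
The images of the `σ_j` are the braid generators `σ_{m+j}`, so only the relations involving
the `a_i` need work. Since `a_i = D σ_i² D⁻¹` with `D = σ_m ⋯ σ_{i+1}`, it lies in the subgroup
generated by `σ_i, …, σ_m`, which gives the commutation with `σ_{m+k}`, `k ≥ 2`. Moving `σ_i²`
through `D` by braid relations also gives `a_i = E⁻¹ σ_m² E` with `E = σ_{m-1} ⋯ σ_i`, which
commutes with `σ_{m+1}`; conjugating by `E` reduces the image of the relation
`a_i σ_1 a_i σ_1 = σ_1 a_i σ_1 a_i` to `σ_m² σ_{m+1} σ_m² σ_{m+1} = σ_{m+1} σ_m² σ_{m+1} σ_m²`.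
Finally `σ_{m+1} a_r σ_{m+1}⁻¹ = W σ_r² W⁻¹` with `W = σ_{m+1} ⋯ σ_{r+1}`, and
`σ_j W = W σ_{j+1}` for `r < j ≤ m`, so each such `σ_j`, and hence `a_i` for `i > r`,
commutes with it.
-/

section BraidIdentities

variable {G : Type*} [Group G] {x y : G}

theorem conj_sq_of_braid (h : x * y * x = y * x * y) : y * x ^ 2 * y⁻¹ = x⁻¹ * y ^ 2 * x :=
  calc y * x ^ 2 * y⁻¹ = x⁻¹ * (x * y * x) * (x * y⁻¹) := by simp only [sq]; group
    _ = x⁻¹ * (y * x * y) * (x * y⁻¹) := by rw [h]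
    _ = x⁻¹ * y * (x * y * x) * y⁻¹ := by group
    _ = x⁻¹ * y * (y * x * y) * y⁻¹ := by rw [h]
    _ = x⁻¹ * y ^ 2 * x := by simp only [sq]; group

theorem sq_braid_of_braid (h : x * y * x = y * x * y) :
    x ^ 2 * y * x ^ 2 * y = y * x ^ 2 * y * x ^ 2 :=
  calc x ^ 2 * y * x ^ 2 * y = x * (x * y * x) * (x * y) := by simp only [sq]; group
    _ = x * (y * x * y) * (x * y) := by rw [h]
    _ = (x * y * x) * (y * x * y) := by group
    _ = (y * x * y) * (y * x * y) := by rw [h]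
    _ = (y * x * y) * (x * y * x) := by rw [h]
    _ = y * x * (y * x * y) * x := by group
    _ = y * x * (x * y * x) * x := by rw [h]
    _ = y * x ^ 2 * y * x ^ 2 := by simp only [sq]; group

end BraidIdentities

namespace BraidGroup

variable {N : ℕ}

theorem of_commute {s t : Fin (N - 1)} (h : (s : ℕ) + 2 ≤ t) :
    Commute (PresentedGroup.of s : BraidGroup N) (PresentedGroup.of t) :=
  commutatorElement_eq_one_iff_commute.mp <|
    PresentedGroup.one_of_mem (Set.mem_union_left _ ⟨s, t, h, rfl⟩)

theorem of_braid {s t : Fin (N - 1)} (h : (s : ℕ) + 1 = t) :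
    (PresentedGroup.of s : BraidGroup N) * PresentedGroup.of t * PresentedGroup.of s =
      PresentedGroup.of t * PresentedGroup.of s * PresentedGroup.of t := by
  have hrel := PresentedGroup.one_of_mem (Set.mem_union_right _ ⟨s, t, h, rfl⟩ : _ ∈ braidRels N)
  simp only [map_mul, map_inv] at hrel
  rwa [mul_inv_eq_one, mul_inv_eq_iff_eq_mul, mul_inv_eq_iff_eq_mul] at hrel

theorem sig_eq_of {s : ℕ} (h1 : 1 ≤ s) (h2 : s ≤ N - 1) :
    sig N s = PresentedGroup.of ⟨s - 1, by omega⟩ :=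
  dif_pos ⟨h1, h2⟩

theorem commute_sig {s t : ℕ} (h : s + 2 ≤ t) : Commute (sig N s) (sig N t) := by
  unfold sig
  split_ifs
  · exact of_commute (by simp only; omega)
  all_goals simp

theorem sig_braid {s : ℕ} (h1 : 1 ≤ s) (h2 : s + 1 ≤ N - 1) :
    sig N s * sig N (s + 1) * sig N s = sig N (s + 1) * sig N s * sig N (s + 1) := by
  rw [sig_eq_of h1 (by omega), sig_eq_of (s := s + 1) (by omega) h2]
  exact of_braid (by simp only; omega)

/-- `σ_b σ_{b-1} ⋯ σ_a`, empty when `b < a`. -/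
def sigDesc (N a b : ℕ) : BraidGroup N :=
  ((List.range (b + 1 - a)).map (fun l => sig N (b - l))).prod

theorem sigDesc_of_lt {a b : ℕ} (h : b < a) : sigDesc N a b = 1 := by
  simp [sigDesc, show b + 1 - a = 0 by omega]

theorem sigDesc_eq_mul_sig {a b : ℕ} (h : a ≤ b) :
    sigDesc N a b = sigDesc N (a + 1) b * sig N a := by
  rw [sigDesc, sigDesc, show b + 1 - a = b + 1 - (a + 1) + 1 by omega, List.range_succ,
    List.map_append, List.prod_append]
  simp [show b - (b - a) = a by omega]

theorem sigDesc_succ {a b : ℕ} (h : a ≤ b + 1) :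
    sigDesc N a (b + 1) = sig N (b + 1) * sigDesc N a b := by
  rw [sigDesc, sigDesc, show b + 1 + 1 - a = b + 1 - a + 1 by omega, List.range_succ_eq_map]
  simp [Function.comp_def]

theorem commute_sigDesc {a b : ℕ} {x : BraidGroup N}
    (h : ∀ u, a ≤ u → u ≤ b → Commute x (sig N u)) : Commute x (sigDesc N a b) :=
  Commute.list_prod_right _ _ <| by
    simp only [List.mem_map, List.mem_range]
    rintro _ ⟨l, hl, rfl⟩
    exact h _ (by omega) (by omega)

theorem sig_mul_sigDesc {a b j : ℕ} (ha : 1 ≤ a) (haj : a ≤ j) (hjb : j < b) (hb : b ≤ N - 1) :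
    sig N j * sigDesc N a b = sigDesc N a b * sig N (j + 1) := by
  induction b, hjb using Nat.le_induction with
  | base =>
    obtain ⟨k, rfl⟩ : ∃ k, j = k + 1 := ⟨j - 1, by omega⟩
    have hc : Commute (sig N (k + 2)) (sigDesc N a k) :=
      commute_sigDesc fun u _ hu => (commute_sig (by omega)).symm
    rw [sigDesc_succ (by omega), sigDesc_succ (by omega)]
    calc sig N (k + 1) * (sig N (k + 2) * (sig N (k + 1) * sigDesc N a k))
        = (sig N (k + 1) * sig N (k + 2) * sig N (k + 1)) * sigDesc N a k := by group
      _ = sig N (k + 2) * sig N (k + 1) * (sig N (k + 2) * sigDesc N a k) := by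
        rw [sig_braid (by omega) (by omega)]; group
      _ = _ := by rw [hc.eq]; group
  | succ b hjb ih =>
    rw [sigDesc_succ (by omega), ← mul_assoc, (commute_sig (by omega)).eq, mul_assoc,
      ih (by omega), mul_assoc]

theorem loop_eq_sigDesc (m i : ℕ) :
    loop N m i = sigDesc N (i + 1) m * sig N i ^ 2 * (sigDesc N (i + 1) m)⁻¹ := by
  simp only [loop, sigDesc, Nat.add_sub_add_right]

theorem commute_loop {m i : ℕ} {x : BraidGroup N} (him : i ≤ m)
    (h : ∀ u, i ≤ u → u ≤ m → Commute (sig N u) x) : Commute (loop N m i) x := by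
  have hD : Commute (sigDesc N (i + 1) m) x :=
    (commute_sigDesc fun u hu hum => (h u (by omega) hum).symm).symm
  rw [loop_eq_sigDesc]
  exact (hD.mul_left ((h i le_rfl him).pow_left 2)).mul_left hD.inv_left

theorem loop_eq_conj_loop_succ {m i : ℕ} (hi : 1 ≤ i) (him : i < m) (hm : m ≤ N - 1) :
    loop N m i = (sig N i)⁻¹ * loop N m (i + 1) * sig N i := by
  have hc : Commute (sig N i) (sigDesc N (i + 2) m) :=
    commute_sigDesc fun u hu _ => commute_sig (by omega)
  rw [loop_eq_sigDesc, loop_eq_sigDesc, sigDesc_eq_mul_sig (show i + 1 ≤ m by omega)]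
  set D := sigDesc N (i + 2) m
  calc D * sig N (i + 1) * sig N i ^ 2 * (D * sig N (i + 1))⁻¹
      = D * (sig N (i + 1) * sig N i ^ 2 * (sig N (i + 1))⁻¹) * D⁻¹ := by group
    _ = D * (sig N i)⁻¹ * sig N (i + 1) ^ 2 * (sig N i * D⁻¹) := by
      rw [conj_sq_of_braid (sig_braid hi (by omega))]; group
    _ = _ := by rw [hc.inv_left.eq.symm, hc.inv_right.eq]; group

theorem loop_eq_conj_sig_sq {m i : ℕ} (hi : 1 ≤ i) (him : i ≤ m) (hm : m ≤ N - 1) :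
    loop N m i = (sigDesc N i (m - 1))⁻¹ * sig N m ^ 2 * sigDesc N i (m - 1) := by
  induction him using Nat.decreasingInduction with
  | self =>
    rw [loop_eq_sigDesc, sigDesc_of_lt (by omega), sigDesc_of_lt (by omega)]
    group
  | of_succ i hlt ih =>
    rw [loop_eq_conj_loop_succ hi hlt hm, ih (by omega), sigDesc_eq_mul_sig (a := i) (by omega)]
    group

theorem loop_sig_loop_sig {m i : ℕ} (hi : 1 ≤ i) (him : i ≤ m) (hm : m + 1 ≤ N - 1) :
    loop N m i * sig N (m + 1) * loop N m i * sig N (m + 1) =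
      sig N (m + 1) * loop N m i * sig N (m + 1) * loop N m i := by
  set E := sigDesc N i (m - 1)
  have hE : E⁻¹ * sig N (m + 1) * E = sig N (m + 1) := by
    rw [(commute_sigDesc fun u _ hu => (commute_sig (by omega)).symm).inv_right.eq.symm,
      inv_mul_cancel_right]
  have key := congrArg (MulAut.conj E⁻¹) (sq_braid_of_braid (sig_braid (s := m) (by omega) hm))
  simp only [map_mul, MulAut.conj_apply, inv_inv, hE] at key
  rwa [loop_eq_conj_sig_sq hi him (by omega)]

theorem commute_loop_conj_loop {m i r : ℕ} (hri : r < i) (him : i ≤ m) (hm : m + 1 ≤ N - 1) :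
    Commute (loop N m i) (sig N (m + 1) * loop N m r * (sig N (m + 1))⁻¹) := by
  have hconj : sig N (m + 1) * loop N m r * (sig N (m + 1))⁻¹ =
      sigDesc N (r + 1) (m + 1) * sig N r ^ 2 * (sigDesc N (r + 1) (m + 1))⁻¹ := by
    rw [loop_eq_sigDesc, sigDesc_succ (by omega)]
    group
  rw [hconj]
  refine commute_loop him fun u hiu hum => ?_
  rw [eq_mul_inv_of_mul_eq
    (sig_mul_sigDesc (a := r + 1) (j := u) (by omega) (by omega) (by omega) hm)]
  exact (Commute.conj_iff _).2 (((commute_sig (by omega)).pow_left 2).symm)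

end BraidGroup

namespace MixedBraid

def braidImage (m n : ℕ) : Fin m ⊕ Fin (n - 1) → BraidGroup (m + n) :=
  Sum.elim (fun i => loop (m + n) m (i + 1)) (fun k => sig (m + n) (m + k + 1))

open BraidGroup in
theorem lift_braidImage_eq_one (m n : ℕ) :
    ∀ r ∈ mixedRels m n, FreeGroup.lift (braidImage m n) r = 1 := by
  rintro _ ((((⟨k, j, hkj, rfl⟩ | ⟨k, j, hkj, rfl⟩) | ⟨i, k, hk, rfl⟩) | ⟨i, k, hk, rfl⟩) |
    ⟨i, r, k, hri, hk, rfl⟩) <;>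
  simp only [genA, genS, map_mul, map_inv, FreeGroup.lift_apply_of, braidImage, Sum.elim_inl,
    Sum.elim_inr]
  · exact commutatorElement_eq_one_iff_commute.2 (commute_sig (by omega))
  · rw [show m + (j : ℕ) + 1 = m + k + 1 + 1 by omega, sig_braid (by omega) (by omega)]
    group
  · exact commutatorElement_eq_one_iff_commute.2
      (commute_loop (by omega) fun u _ hu => commute_sig (by omega))
  · rw [hk, loop_sig_loop_sig (by omega) (by omega) (by omega)]
    group
  · rw [hk]
    exact commutatorElement_eq_one_iff_commute.2
      (commute_loop_conj_loop (by omega) (by omega) (by omega))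

def toBraid (m n : ℕ) : MixedBraid m n →* BraidGroup (m + n) :=
  PresentedGroup.toGroup (lift_braidImage_eq_one m n)

end MixedBraid

theorem mixed_to_braid_hom_general (m n : ℕ) :
    ∃ φ : MixedBraid m n →* BraidGroup (m + n),
      (∀ i : ℕ, 1 ≤ i → i ≤ m → φ (aGen m n i) = loop (m + n) m i) ∧
      (∀ j : ℕ, 1 ≤ j → j ≤ n - 1 → φ (sGen m n j) = sig (m + n) (m + j)) := by
  refine ⟨MixedBraid.toBraid m n, fun i hi him => ?_, fun j hj hjn => ?_⟩
  · rw [aGen, dif_pos ⟨hi, him⟩, MixedBraid.toBraid, PresentedGroup.toGroup.of]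
    exact congrArg (loop (m + n) m) (Nat.sub_add_cancel hi)
  · rw [sGen, dif_pos ⟨hj, hjn⟩, MixedBraid.toBraid, PresentedGroup.toGroup.of]
    exact congrArg (sig (m + n)) (by simp only; omega)

/-- There is a group homomorphism `φ : B_{m,n} → B_{m+n}` sending `a_i` to the
loop element `σ_m ⋯ σ_{i+1} σ_i² σ_{i+1}⁻¹ ⋯ σ_m⁻¹` and `σ_j` to `σ_{m+j}`. -/
theorem mixed_to_braid_hom (m n : ℕ) (hm : 1 ≤ m) (hn : 1 ≤ n) :
    ∃ φ : MixedBraid m n →* BraidGroup (m + n),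
      (∀ i : ℕ, 1 ≤ i → i ≤ m → φ (aGen m n i) = loop (m + n) m i) ∧
      (∀ j : ℕ, 1 ≤ j → j ≤ n - 1 → φ (sGen m n j) = sig (m + n) (m + j)) :=
  mixed_to_braid_hom_general m n
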